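/- Let C ∈ M_{n-1}. The space Z²_g(p(C),V) of graded 2-cocycles (identified with the subvariety of k^{n-1} of tuples (θ_i) satisfying θ_i = θ_{n-i} and θ_{i+j}c_{ij} = θ_{j+k}c_{jk} for i+j+k=n) is a linear subspace of k^{n-1} of dimension at most u(C), the number of generic connected components of Gr(C). -/

import Mathlib

/-- Adjacency condition of the graph `Gr(C)`. -/
def adjRel {K : Type*} [Field K] (n : ℕ) (c : ℕ → ℕ → K) (p q : ℕ) : Prop :=
  p + q = n ∨ ∃ i j l, 1 ≤ i ∧ 1 ≤ j ∧ 1 ≤ l ∧ i + j + l = n ∧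
    p = i + j ∧ q = j + l ∧ c i j * c j l ≠ 0

/-- The undirected simple graph `Gr(C)` on the vertices `1,...,n-1`. -/
def grC {K : Type*} [Field K] (n : ℕ) (c : ℕ → ℕ → K) : SimpleGraph ℕ where
  Adj p q := p ≠ q ∧ (adjRel n c p q ∨ adjRel n c q p)
  symm := by refine ⟨?_⟩; intro p q h; exact ⟨h.1.symm, h.2.symm⟩
  loopless := by refine ⟨?_⟩; intro p h; exact h.1 rfl

/-- The number `u(C)` of generic connected components of `Gr(C)`: components meeting
`{1,...,n-1}` and containing no vertex `i+j` with `c_{ij} ≠ 0` and `c_{j,n-i-j} = 0`. -/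
noncomputable def uC {K : Type*} [Field K] (n : ℕ) (c : ℕ → ℕ → K) : ℕ :=
  Set.ncard {Kc : (grC n c).ConnectedComponent |
    (∃ p, 1 ≤ p ∧ p ≤ n - 1 ∧ (grC n c).connectedComponentMk p = Kc) ∧
    ∀ p i j, (grC n c).connectedComponentMk p = Kc → 1 ≤ i → 1 ≤ j → p = i + j →
      c i j ≠ 0 → c j (n - i - j) ≠ 0}

/-!
If `t` is a graded 2-cocycle, then along every edge `p ~ q` of `Gr(C)` either both or neither of
`t p`, `t q` vanish: for `p + q = n` because `t p = t q`, otherwise because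
`t (i+j) c_{ij} = t (j+l) c_{jl}` with `c_{ij} c_{jl} ≠ 0`. Hence the zero set of `t` is a union
of connected components. It contains every contractible component, since at a vertex `i + j`
with `c_{ij} ≠ 0 = c_{j,n-i-j}` the cocycle identity forces `t (i+j) = 0`. So `t` is determined
by its values at one vertex of each generic component, and evaluation there is injective.
-/

theorem SimpleGraph.Reachable.mem_of_forall_adj_mem {V : Type*} {G : SimpleGraph V}
    {s : Set V} (hs : ∀ u v, G.Adj u v → u ∈ s → v ∈ s) {u v : V} (huv : G.Reachable u v)
    (hu : u ∈ s) : v ∈ s := by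
  obtain ⟨w⟩ := huv
  induction w with
  | nil => exact hu
  | cons h _ ih => exact ih (hs _ _ h hu)

theorem Submodule.finrank_le_ncard_of_eqOn_zero {ι K : Type*} [Field K]
    (Z : Submodule K (ι → K)) {s : Set ι} (hs : s.Finite)
    (h : ∀ t ∈ Z, (∀ i ∈ s, t i = 0) → t = 0) : Module.finrank K Z ≤ s.ncard := by
  have := hs.fintype
  let restrict : Z →ₗ[K] (s → K) := (LinearMap.funLeft K K ((↑) : s → ι)).comp Z.subtype
  have hinj : Function.Injective restrict := by
    refine (injective_iff_map_eq_zero restrict).2 fun t ht => Subtype.ext ?_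
    exact h t t.2 fun i hi => congrFun ht ⟨i, hi⟩
  calc Module.finrank K Z ≤ Module.finrank K (s → K) :=
        restrict.finrank_le_finrank_of_injective hinj
    _ = s.ncard := by
        rw [Module.finrank_fintype_fun_eq_card, Set.ncard_eq_toFinset_card', Set.toFinset_card]

section GradedCocycles

variable {K : Type*} [Field K] (n : ℕ) (c : ℕ → ℕ → K)

def gradedCocycles : Submodule K (ℕ → K) where
  carrier := {t | (∀ i, i = 0 ∨ n ≤ i → t i = 0) ∧
    (∀ i, 1 ≤ i → i ≤ n - 1 → t i = t (n - i)) ∧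
    (∀ i j l, 1 ≤ i → 1 ≤ j → 1 ≤ l → i + j + l = n →
      t (i + j) * c i j = t (j + l) * c j l)}
  add_mem' := by
    rintro a b ⟨ha₀, ha₁, ha₂⟩ ⟨hb₀, hb₁, hb₂⟩
    refine ⟨fun i hi => ?_, fun i h₁ h₂ => ?_, fun i j l h₁ h₂ h₃ h₄ => ?_⟩
    · simp [ha₀ i hi, hb₀ i hi]
    · simp [ha₁ i h₁ h₂, hb₁ i h₁ h₂]
    · simp [add_mul, ha₂ i j l h₁ h₂ h₃ h₄, hb₂ i j l h₁ h₂ h₃ h₄]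
  zero_mem' := ⟨fun _ _ => rfl, fun _ _ _ => rfl, fun _ _ _ _ _ _ _ => by simp⟩
  smul_mem' := by
    rintro a t ⟨h₀, h₁, h₂⟩
    refine ⟨fun i hi => ?_, fun i hi₁ hi₂ => ?_, fun i j l h₁' h₂' h₃' h₄' => ?_⟩
    · simp [h₀ i hi]
    · simp [h₁ i hi₁ hi₂]
    · simp [mul_assoc, h₂ i j l h₁' h₂' h₃' h₄']

def genericComponents : Set (grC n c).ConnectedComponent :=
  {Kc | (∃ p, 1 ≤ p ∧ p ≤ n - 1 ∧ (grC n c).connectedComponentMk p = Kc) ∧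
    ∀ p i j, (grC n c).connectedComponentMk p = Kc → 1 ≤ i → 1 ≤ j → p = i + j →
      c i j ≠ 0 → c j (n - i - j) ≠ 0}

theorem uC_eq_ncard_genericComponents : uC n c = (genericComponents n c).ncard := rfl

theorem genericComponents_finite : (genericComponents n c).Finite :=
  ((Set.finite_Icc 1 (n - 1)).image (grC n c).connectedComponentMk).subset
    fun _ ⟨⟨p, hp₁, hp₂, hp⟩, _⟩ => ⟨p, ⟨hp₁, hp₂⟩, hp⟩

variable {n c}

namespace gradedCocycles

variable {t : ℕ → K}

theorem eq_zero_iff_of_adjRel (ht : t ∈ gradedCocycles n c) {p q : ℕ} (hpq : adjRel n c p q) :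
    t p = 0 ↔ t q = 0 := by
  obtain ⟨h₀, h₁, h₂⟩ := ht
  rcases hpq with hpq | ⟨i, j, l, hi, hj, hl, hijl, rfl, rfl, hc⟩
  · rcases Nat.eq_zero_or_pos p with rfl | hp
    · simp [h₀ 0 (Or.inl rfl), h₀ q (Or.inr (by omega))]
    rcases Nat.eq_zero_or_pos q with rfl | hq
    · simp [h₀ 0 (Or.inl rfl), h₀ p (Or.inr (by omega))]
    rw [h₁ p hp (by omega), show n - p = q by omega]
  · obtain ⟨hcij, hcjl⟩ := mul_ne_zero_iff.1 hc
    have hcoc := h₂ i j l hi hj hl hijl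
    constructor <;> intro h <;> simp_all

theorem eq_zero_of_reachable (ht : t ∈ gradedCocycles n c) {p q : ℕ}
    (hpq : (grC n c).Reachable p q) (hp : t p = 0) : t q = 0 :=
  hpq.mem_of_forall_adj_mem (s := {p | t p = 0}) (fun _ _ (h : (grC n c).Adj _ _) =>
    h.2.elim (eq_zero_iff_of_adjRel ht · |>.1) (eq_zero_iff_of_adjRel ht · |>.2)) hp

theorem eq_zero_of_contractible (ht : t ∈ gradedCocycles n c) {i j : ℕ} (hi : 1 ≤ i)
    (hj : 1 ≤ j) (hcij : c i j ≠ 0) (hcjl : c j (n - i - j) = 0) : t (i + j) = 0 := by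
  obtain ⟨h₀, -, h₂⟩ := ht
  by_cases hn : n ≤ i + j
  · exact h₀ _ (Or.inr hn)
  have hcoc := h₂ i j (n - i - j) hi hj (by omega) (by omega)
  rw [hcjl, mul_zero, mul_eq_zero] at hcoc
  exact hcoc.resolve_right hcij

theorem eq_zero_of_eq_zero_on_genericComponents (ht : t ∈ gradedCocycles n c)
    (hgen : ∀ Kc ∈ genericComponents n c, t (Quot.out Kc) = 0) : t = 0 := by
  funext p
  by_cases hp : p = 0 ∨ n ≤ p
  · exact ht.1 p hp
  by_cases hKc : (grC n c).connectedComponentMk p ∈ genericComponents n c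
  · exact eq_zero_of_reachable ht (SimpleGraph.ConnectedComponent.exact (Quot.out_eq _))
      (hgen _ hKc)
  · have hcontr := not_and.1 hKc ⟨p, by omega, by omega, rfl⟩
    push Not at hcontr
    obtain ⟨q, i, j, hq, hi, hj, rfl, hcij, hcjl⟩ := hcontr
    exact eq_zero_of_reachable ht (SimpleGraph.ConnectedComponent.exact hq)
      (eq_zero_of_contractible ht hi hj hcij hcjl)

end gradedCocycles

theorem finrank_gradedCocycles_le : Module.finrank K (gradedCocycles n c) ≤ uC n c := by
  rw [uC_eq_ncard_genericComponents,
    ← (SimpleGraph.ConnectedComponent.Represents.image_out _).ncard_eq]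
  refine Submodule.finrank_le_ncard_of_eqOn_zero _ ((genericComponents_finite n c).image _) ?_
  exact fun t ht hzero => gradedCocycles.eq_zero_of_eq_zero_on_genericComponents ht
    fun Kc hKc => hzero _ ⟨Kc, hKc, rfl⟩

end GradedCocycles

theorem stmt_13_general {K : Type*} [Field K] (n : ℕ) (c : ℕ → ℕ → K) :
    -- the set of 2-cocycle tuples (inside k^{n-1}) is a linear subspace of
    -- dimension at most u(C)
    ∃ Z : Submodule K (ℕ → K),
      (Z : Set (ℕ → K)) =
        {t | (∀ i, i = 0 ∨ n ≤ i → t i = 0) ∧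
          (∀ i, 1 ≤ i → i ≤ n - 1 → t i = t (n - i)) ∧
          (∀ i j l, 1 ≤ i → 1 ≤ j → 1 ≤ l → i + j + l = n →
            t (i + j) * c i j = t (j + l) * c j l)} ∧
      Module.finrank K Z ≤ uC n c :=
  ⟨gradedCocycles n c, rfl, finrank_gradedCocycles_le⟩

theorem stmt_13 {K : Type*} [Field K] (n : ℕ) (hn : 2 ≤ n) (c : ℕ → ℕ → K)
    (hsym : ∀ i j, c i j = c j i)
    (hassoc : ∀ i j l, 1 ≤ i → 1 ≤ j → 1 ≤ l →
      c j l * c i (j + l) = c i j * c (i + j) l)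
    (hzero : ∀ i j, i = 0 ∨ j = 0 ∨ n - 1 < i + j → c i j = 0) :
    -- the set of 2-cocycle tuples (inside k^{n-1}) is a linear subspace of
    -- dimension at most u(C)
    ∃ Z : Submodule K (ℕ → K),
      (Z : Set (ℕ → K)) =
        {t | (∀ i, i = 0 ∨ n ≤ i → t i = 0) ∧
          (∀ i, 1 ≤ i → i ≤ n - 1 → t i = t (n - i)) ∧
          (∀ i j l, 1 ≤ i → 1 ≤ j → 1 ≤ l → i + j + l = n →
            t (i + j) * c i j = t (j + l) * c j l)} ∧
      Module.finrank K Z ≤ uC n c :=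
  stmt_13_general n c
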